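/- arXiv:2403.02524 — 5 statements merged into one kernel-verified Lean document; each statement's English description precedes it below -/
import Mathlib

section
/- In a reproducing kernel Hilbert space H on a connected open set Ω ⊆ ℝ^d whose elements are real analytic functions, the span of the functions {∂_x^α k(x,·)|_{x=p} : α ∈ (ℤ≥0)^d} (for a fixed point p ∈ Ω) is dense in H. -/
open scoped BigOperators

noncomputable def pderivW {d : ℕ} (Ω : Set (Fin d → ℝ)) (i : Fin d)
    (h : (Fin d → ℝ) → ℂ) : (Fin d → ℝ) → ℂ :=
  fun x => fderivWithin ℝ h Ω x (Pi.single i 1)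

noncomputable def pIterW {d : ℕ} (Ω : Set (Fin d → ℝ)) (i : Fin d) :
    ℕ → ((Fin d → ℝ) → ℂ) → ((Fin d → ℝ) → ℂ)
  | 0, h => h
  | n + 1, h => pderivW Ω i (pIterW Ω i n h)

/-- The multi-index partial derivative `∂^α h` (taken within `Ω`). -/
noncomputable def mDerivW {d : ℕ} (Ω : Set (Fin d → ℝ)) (α : Fin d → ℕ)
    (h : (Fin d → ℝ) → ℂ) : (Fin d → ℝ) → ℂ :=
  (List.finRange d).foldr (fun i g => pIterW Ω i (α i) g) h

section Aux

variable {d : ℕ}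

/-- Partial derivative (full, not within). -/
noncomputable def pdF (i : Fin d) (g : (Fin d → ℝ) → ℂ) : (Fin d → ℝ) → ℂ :=
  fun x => fderiv ℝ g x (Pi.single i 1)

/-- Iterated directional derivatives along a list of coordinate directions. -/
noncomputable def dlF (L : List (Fin d)) (g : (Fin d → ℝ) → ℂ) : (Fin d → ℝ) → ℂ :=
  L.foldr pdF g

lemma pdF_analytic {U : Set (Fin d → ℝ)} {g : (Fin d → ℝ) → ℂ}
    (hg : AnalyticOnNhd ℝ g U) (i : Fin d) : AnalyticOnNhd ℝ (pdF i g) U := by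
  intro x hx
  have h1 : AnalyticAt ℝ (fderiv ℝ g) x := (hg x hx).fderiv
  exact ((ContinuousLinearMap.apply ℝ ℂ (Pi.single i 1)).analyticAt _).comp h1

lemma dlF_analytic {U : Set (Fin d → ℝ)} {g : (Fin d → ℝ) → ℂ}
    (hg : AnalyticOnNhd ℝ g U) : ∀ L : List (Fin d), AnalyticOnNhd ℝ (dlF L g) U
  | [] => hg
  | i :: L => pdF_analytic (dlF_analytic hg L) i

lemma pdF_congr {U : Set (Fin d → ℝ)} (hU : IsOpen U) {g₁ g₂ : (Fin d → ℝ) → ℂ}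
    (h : Set.EqOn g₁ g₂ U) (i : Fin d) : Set.EqOn (pdF i g₁) (pdF i g₂) U := by
  intro x hx
  have hev : g₁ =ᶠ[nhds x] g₂ := Filter.eventuallyEq_of_mem (hU.mem_nhds hx) h
  simp only [pdF]
  rw [hev.fderiv_eq]

lemma foldrW_eqOn {U : Set (Fin d → ℝ)} (hU : IsOpen U) (g : (Fin d → ℝ) → ℂ) :
    ∀ L : List (Fin d),
      Set.EqOn (L.foldr (fun i h => pderivW U i h) g) (dlF L g) U
  | [] => fun _ _ => rfl
  | i :: L => by
    intro x hx
    have h1 : fderivWithin ℝ (L.foldr (fun i h => pderivW U i h) g) U x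
        = fderivWithin ℝ (dlF L g) U x :=
      fderivWithin_congr (foldrW_eqOn hU g L) (foldrW_eqOn hU g L hx)
    show fderivWithin ℝ (L.foldr (fun i h => pderivW U i h) g) U x (Pi.single i 1)
      = fderiv ℝ (dlF L g) x (Pi.single i 1)
    rw [h1, fderivWithin_of_isOpen hU hx]

lemma pIterW_eq (U : Set (Fin d → ℝ)) (i : Fin d) (g : (Fin d → ℝ) → ℂ) :
    ∀ n : ℕ, pIterW U i n g = (List.replicate n i).foldr (fun j h => pderivW U j h) g
  | 0 => rfl
  | n + 1 => by
    rw [List.replicate_succ, List.foldr_cons, ← pIterW_eq U i g n]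
    rfl

lemma foldr_flatMap (U : Set (Fin d → ℝ)) (g : (Fin d → ℝ) → ℂ) (α : Fin d → ℕ) :
    ∀ l : List (Fin d),
      ((l.flatMap fun i => List.replicate (α i) i).foldr (fun j h => pderivW U j h) g)
        = l.foldr (fun i h => pIterW U i (α i) h) g
  | [] => rfl
  | i :: l => by
    rw [List.flatMap_cons, List.foldr_append, foldr_flatMap U g α l, List.foldr_cons,
      pIterW_eq]

lemma count_flat_nodup (α : Fin d → ℕ) (j : Fin d) :
    ∀ l : List (Fin d), l.Nodup →
      ((l.flatMap fun i => List.replicate (α i) i).count j = if j ∈ l then α j else 0)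
  | [], _ => by simp
  | i :: l, hnd => by
    rw [List.flatMap_cons, List.count_append, List.count_replicate,
      count_flat_nodup α j l hnd.of_cons]
    by_cases hji : j = i
    · subst hji
      have : j ∉ l := (List.nodup_cons.mp hnd).1
      simp [this]
    · simp [hji, Ne.symm hji, List.mem_cons]

lemma count_ofα (α : Fin d → ℕ) (j : Fin d) :
    (((List.finRange d).flatMap fun i => List.replicate (α i) i).count j) = α j := by
  rw [count_flat_nodup α j _ (List.nodup_finRange d)]
  simp [List.mem_finRange]

lemma mDerivW_eqOn_dlF {U : Set (Fin d → ℝ)} (hU : IsOpen U) (g : (Fin d → ℝ) → ℂ)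
    (α : Fin d → ℕ) :
    Set.EqOn (mDerivW U α g)
      (dlF ((List.finRange d).flatMap fun i => List.replicate (α i) i) g) U := by
  intro x hx
  have h1 : mDerivW U α g
      = ((List.finRange d).flatMap fun i => List.replicate (α i) i).foldr
          (fun j h => pderivW U j h) g :=
    (foldr_flatMap U g α (List.finRange d)).symm
  rw [h1]
  exact foldrW_eqOn hU g _ hx

lemma pdF_swap {U : Set (Fin d → ℝ)} (hU : IsOpen U) {h : (Fin d → ℝ) → ℂ}
    (hh : AnalyticOnNhd ℝ h U) {x : Fin d → ℝ} (hx : x ∈ U) (i j : Fin d) :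
    pdF i (pdF j h) x = pdF j (pdF i h) x := by
  have hdiff : DifferentiableAt ℝ (fderiv ℝ h) x := by
    have h2 : ContDiffAt ℝ 2 h x := (hh x hx).contDiffAt
    exact (h2.fderiv_right (m := 1) (by norm_num)).differentiableAt one_ne_zero
  have key : ∀ a b : Fin d, pdF a (pdF b h) x
      = fderiv ℝ (fderiv ℝ h) x (Pi.single a 1) (Pi.single b 1) := by
    intro a b
    show fderiv ℝ (fun y => fderiv ℝ h y (Pi.single b 1)) x (Pi.single a 1) = _
    rw [fderiv_clm_apply hdiff (differentiableAt_const _)]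
    simp
  rw [key i j, key j i]
  exact ((hh x hx).contDiffAt (n := 2)).isSymmSndFDerivAt (by simp) _ _

lemma dlF_perm {U : Set (Fin d → ℝ)} (hU : IsOpen U) {g : (Fin d → ℝ) → ℂ}
    (hg : AnalyticOnNhd ℝ g U) {L L' : List (Fin d)} (hperm : L.Perm L') :
    Set.EqOn (dlF L g) (dlF L' g) U := by
  induction hperm with
  | nil => exact fun _ _ => rfl
  | cons i _ ih => exact pdF_congr hU ih i
  | swap i j L =>
    intro x hx
    exact pdF_swap hU (dlF_analytic hg L) hx j i
  | trans _ _ ih₁ ih₂ => exact fun x hx => (ih₁ hx).trans (ih₂ hx)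

lemma itfd_eq_dlF {U : Set (Fin d → ℝ)} (hU : IsOpen U) {g : (Fin d → ℝ) → ℂ}
    (hg : AnalyticOnNhd ℝ g U) :
    ∀ (n : ℕ) (v : Fin n → Fin d) (x : Fin d → ℝ), x ∈ U →
      iteratedFDeriv ℝ n g x (fun j => Pi.single (v j) 1) = dlF (List.ofFn v) g x := by
  intro n
  induction n with
  | zero =>
    intro v x hx
    rw [List.ofFn_zero]
    exact iteratedFDeriv_zero_apply _
  | succ n ih =>
    intro v x hx
    rw [iteratedFDeriv_succ_apply_left]
    have hdiff : DifferentiableAt ℝ (iteratedFDeriv ℝ n g) x := by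
      have hc : ContDiffAt ℝ ((n + 1 : ℕ) : ℕ∞) g x := (hg x hx).contDiffAt
      have := hc.iteratedFDeriv_right (i := n) (m := 1) (by norm_cast; omega)
      exact this.differentiableAt one_ne_zero
    have e1 : (Fin.tail fun j : Fin (n + 1) => (Pi.single (v j) 1 : Fin d → ℝ))
        = fun j : Fin n => (Pi.single (v j.succ) 1 : Fin d → ℝ) := by
      funext j
      rfl
    rw [e1, ← fderiv_continuousMultilinear_apply_const_apply hdiff]
    have e2 : (fun y => iteratedFDeriv ℝ n g y (fun j : Fin n => Pi.single (v j.succ) (1 : ℝ)))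
        =ᶠ[nhds x] dlF (List.ofFn fun j => v j.succ) g := by
      filter_upwards [hU.mem_nhds hx] with y hy using ih (fun j => v j.succ) y hy
    rw [e2.fderiv_eq, List.ofFn_succ]
    rfl

lemma zero_of_derivs_zero {Ω : Set (Fin d → ℝ)} (hΩ : IsOpen Ω)
    (hconn : IsPreconnected Ω) {f : (Fin d → ℝ) → ℂ} (hf : AnalyticOnNhd ℝ f Ω)
    {p : Fin d → ℝ} (hp : p ∈ Ω) (hz : ∀ α : Fin d → ℕ, mDerivW Ω α f p = 0) :
    Set.EqOn f 0 Ω := by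
  have hdl : ∀ L : List (Fin d), dlF L f p = 0 := by
    intro L
    set α : Fin d → ℕ := fun i => L.count i with hα
    have hperm : L.Perm ((List.finRange d).flatMap fun i => List.replicate (α i) i) := by
      refine List.perm_iff_count.mpr fun j => ?_
      rw [count_ofα α j]
    calc dlF L f p
        = dlF ((List.finRange d).flatMap fun i => List.replicate (α i) i) f p :=
          dlF_perm hΩ hf hperm hp
      _ = mDerivW Ω α f p := (mDerivW_eqOn_dlF hΩ f α hp).symm
      _ = 0 := hz α
  have hitfd : ∀ n : ℕ, iteratedFDeriv ℝ n f p = 0 := by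
    intro n
    have hbasis : ∀ v : Fin n → Fin d,
        iteratedFDeriv ℝ n f p (fun j => Pi.single (v j) 1) = 0 :=
      fun v => (itfd_eq_dlF hΩ hf n v p hp).trans (hdl _)
    apply ContinuousMultilinearMap.toMultilinearMap_injective
    apply Module.Basis.ext_multilinear (fun _ => Pi.basisFun ℝ (Fin d))
    intro v
    simpa [Pi.basisFun_apply] using hbasis v
  obtain ⟨pf, r, hpf⟩ := hf p hp
  have hev : f =ᶠ[nhds p] 0 := by
    filter_upwards [EMetric.ball_mem_nhds p hpf.r_pos] with x hx
    have hy : x - p ∈ Metric.eball (0 : Fin d → ℝ) r := by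
      have : edist (x - p) (0 : Fin d → ℝ) = edist x p := by
        rw [← sub_self p, edist_sub_right]
      simpa [Metric.mem_eball, this] using hx
    have hsum := hpf.hasSum_iteratedFDeriv hy
    simp only [hitfd, ContinuousMultilinearMap.zero_apply, smul_zero] at hsum
    have h0 : f (p + (x - p)) = 0 := hsum.unique hasSum_zero
    simpa using h0
  exact hf.eqOn_zero_of_preconnected_of_eventuallyEq_zero hconn hp hev

end Aux

/-- Let `H` be an RKHS on a connected open set `Ω ⊆ ℝ^d` (realized as a
space of functions via `Φ`, injectively on `Ω`) whose elements are real analytic, and let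
`v α = ∂_x^α k(x,·)|_{x=p}` be the kernel derivative sections at `p ∈ Ω`, characterized by
`⟨v α, h⟩ = ∂^α (Φ h)(p)`.  Then the span of `{v α : α}` is dense in `H`. -/
theorem span_kernel_derivatives_dense
    {d : ℕ} (Ω : Set (Fin d → ℝ)) (hΩ : IsOpen Ω) (hconn : IsConnected Ω)
    (H : Type*) [NormedAddCommGroup H] [InnerProductSpace ℂ H] [CompleteSpace H]
    (Φ : H →ₗ[ℂ] ((Fin d → ℝ) → ℂ))
    (hinj : ∀ h : H, (∀ x ∈ Ω, Φ h x = 0) → h = 0)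
    (hanal : ∀ h : H, AnalyticOnNhd ℝ (Φ h) Ω)
    (p : Fin d → ℝ) (hp : p ∈ Ω)
    (v : (Fin d → ℕ) → H)
    (hv : ∀ (α : Fin d → ℕ) (h : H), (inner ℂ (v α) h : ℂ) = mDerivW Ω α (Φ h) p) :
    Dense ((Submodule.span ℂ (Set.range v) : Submodule ℂ H) : Set H) := by
  have htop : (Submodule.span ℂ (Set.range v)).topologicalClosure = ⊤ := by
    rw [Submodule.topologicalClosure_eq_top_iff, Submodule.eq_bot_iff]
    intro h hmem
    apply hinj
    intro x hx
    have hz : ∀ α : Fin d → ℕ, mDerivW Ω α (Φ h) p = 0 := by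
      intro α
      rw [← hv α h]
      exact (Submodule.mem_orthogonal _ h).mp hmem (v α)
        (Submodule.subset_span ⟨α, rfl⟩)
    exact zero_of_derivs_zero hΩ hconn.isPreconnected (hanal h) hp hz hx
  rw [dense_iff_closure_eq, ← Submodule.topologicalClosure_coe, htop, Submodule.top_coe]
end

section
/- The reproducing kernel Hilbert space of the exponential kernel k(x,y) = exp((x−b)^⊤(y−b)/σ²) on ℝ^d consists of the power series h(x) = Σ_α a_α (x−b)^α with Σ_α σ^{2|α|} α! |a_α|² < ∞, with inner product ⟨h, g⟩ = Σ_α σ^{2|α|} α! a_α conj(b_α). In particular, ⟨h, k_x⟩ = h(x) for every x ∈ ℝ^d. -/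
/-!
With `z i = (x i - b i) (y i - b i) / σ²`, the weighted products of kernel coefficients factor
over the coordinates: `σ^{2|α|} α! κ_y(α) conj κ_x(α) = ∏ i, z i ^ α i / (α i)!`. Summing over
`α` gives `∏ i, exp (z i)`, which is the kernel; the case `y = x` shows that `κ_x` has finite
weighted norm. The weighted pairing of `a` with `κ_x` then converges absolutely by AM-GM, and its
terms are exactly `a α (x - b)^α`.
-/

open scoped BigOperators ComplexConjugate

/-- The weight `σ^{2|α|} α!` attached to a multi-index `α`. -/
noncomputable def wt (d : ℕ) (σ : ℝ) (α : Fin d → ℕ) : ℝ :=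
  σ ^ (2 * ∑ i, α i) * ∏ i, (Nat.factorial (α i) : ℝ)

/-- The monomial `(x − b)^α`, viewed as a complex number. -/
noncomputable def mono (d : ℕ) (x b : Fin d → ℝ) (α : Fin d → ℕ) : ℂ :=
  ∏ i, ((x i : ℂ) - (b i : ℂ)) ^ (α i)

/-- The coefficient family of the kernel section `k_x` of the exponential kernel:
`κ_x(α) = (x−b)^α / (σ^{2|α|} α!)`. -/
noncomputable def kerCoeff (d : ℕ) (σ : ℝ) (b x : Fin d → ℝ) (α : Fin d → ℕ) : ℂ :=
  mono d x b α / (wt d σ α : ℂ)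

theorem summable_pi_prod_of_nonneg {d : ℕ} {g : Fin d → ℕ → ℝ} (hg₀ : ∀ i n, 0 ≤ g i n)
    (hg : ∀ i, Summable (g i)) : Summable fun α : Fin d → ℕ => ∏ i, g i (α i) := by
  induction d with
  | zero => exact Summable.of_finite
  | succ d ih =>
    have htail := ih (fun i => hg₀ i.succ) (fun i => hg i.succ)
    rw [← (Fin.consEquiv fun _ => ℕ).summable_iff]
    simpa [Function.comp_def, Fin.prod_univ_succ] using
      (hg 0).mul_of_nonneg htail (hg₀ 0) fun β => Finset.prod_nonneg fun i _ => hg₀ i.succ _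

section PiProd

variable {R : Type*} [NormedCommRing R] [NormOneClass R]

theorem summable_norm_pi_prod {d : ℕ} {f : Fin d → ℕ → R}
    (hf : ∀ i, Summable fun n => ‖f i n‖) :
    Summable fun α : Fin d → ℕ => ‖∏ i, f i (α i)‖ :=
  (summable_pi_prod_of_nonneg (fun _ _ => norm_nonneg _) hf).of_nonneg_of_le
    (fun _ => norm_nonneg _) fun _ => Finset.norm_prod_le _ _

theorem tsum_pi_prod [CompleteSpace R] {d : ℕ} {f : Fin d → ℕ → R}
    (hf : ∀ i, Summable fun n => ‖f i n‖) :
    ∑' α : Fin d → ℕ, ∏ i, f i (α i) = ∏ i, ∑' n, f i n := by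
  induction d with
  | zero => simp
  | succ d ih =>
    rw [← (Fin.consEquiv fun _ => ℕ).tsum_eq, Fin.prod_univ_succ, ← ih fun i => hf i.succ,
      tsum_mul_tsum_of_summable_norm (hf 0) (summable_norm_pi_prod fun i => hf i.succ)]
    simp [Fin.prod_univ_succ]

end PiProd

theorem hasSum_pi_prod_pow_div_factorial {d : ℕ} (z : Fin d → ℂ) :
    HasSum (fun α : Fin d → ℕ => ∏ i, z i ^ α i / (α i).factorial)
      (Complex.exp (∑ i, z i)) := by
  have hz : ∀ i, Summable fun n => ‖z i ^ n / n.factorial‖ := fun i => by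
    simpa [norm_div, norm_pow] using Real.summable_pow_div_factorial ‖z i‖
  refine (summable_norm_pi_prod hz).of_norm.hasSum_iff.mpr ?_
  rw [tsum_pi_prod hz, Complex.exp_sum]
  exact Finset.prod_congr rfl fun i _ =>
    by rw [Complex.exp_eq_exp_ℂ, NormedSpace.exp_eq_tsum_div]

theorem summable_mul_mul_conj {ι : Type*} {w : ι → ℝ} (hw : ∀ i, 0 ≤ w i) {u v : ι → ℂ}
    (hu : Summable fun i => w i * ‖u i‖ ^ 2) (hv : Summable fun i => w i * ‖v i‖ ^ 2) :
    Summable fun i => (w i : ℂ) * u i * conj (v i) := by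
  refine Summable.of_norm_bounded ((hu.add hv).div_const 2) fun i => ?_
  have hamgm := mul_le_mul_of_nonneg_left (two_mul_le_add_sq ‖u i‖ ‖v i‖) (hw i)
  rw [norm_mul, norm_mul, Complex.norm_conj, Complex.norm_real, Real.norm_of_nonneg (hw i)]
  linarith

section ExponentialKernel

variable {d : ℕ} {σ : ℝ} {b : Fin d → ℝ}

theorem wt_eq_prod (α : Fin d → ℕ) :
    wt d σ α = ∏ i, (σ ^ 2) ^ α i * ((α i).factorial : ℝ) := by
  rw [wt, Finset.prod_mul_distrib, Finset.prod_pow_eq_pow_sum, ← pow_mul]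

theorem wt_pos (hσ : σ ≠ 0) (α : Fin d → ℕ) : 0 < wt d σ α := by
  rw [wt_eq_prod]
  exact Finset.prod_pos fun i _ => by positivity

theorem conj_mono (x : Fin d → ℝ) (α : Fin d → ℕ) : conj (mono d x b α) = mono d x b α := by
  simp [mono, map_prod]

theorem wt_mul_mul_conj_kerCoeff (hσ : σ ≠ 0) (a : ℂ) (x : Fin d → ℝ) (α : Fin d → ℕ) :
    (wt d σ α : ℂ) * a * conj (kerCoeff d σ b x α) = a * mono d x b α := by
  have hwt : (wt d σ α : ℂ) ≠ 0 := Complex.ofReal_ne_zero.mpr (wt_pos hσ α).ne'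
  rw [kerCoeff, map_div₀, conj_mono, Complex.conj_ofReal]
  field_simp

theorem wt_mul_kerCoeff_mul_conj_kerCoeff (hσ : σ ≠ 0) (x y : Fin d → ℝ) (α : Fin d → ℕ) :
    (wt d σ α : ℂ) * kerCoeff d σ b y α * conj (kerCoeff d σ b x α)
      = ∏ i, (((x i : ℂ) - b i) * ((y i : ℂ) - b i) / (σ : ℂ) ^ 2) ^ α i / (α i).factorial := by
  rw [wt_mul_mul_conj_kerCoeff hσ, kerCoeff, div_mul_eq_mul_div, mono, mono,
    ← Finset.prod_mul_distrib, wt_eq_prod, Complex.ofReal_prod, ← Finset.prod_div_distrib]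
  refine Finset.prod_congr rfl fun i _ => ?_
  push_cast
  rw [div_pow, div_div, ← mul_pow, mul_comm ((y i : ℂ) - b i)]

theorem summable_wt_mul_norm_kerCoeff_sq (hσ : σ ≠ 0) (x : Fin d → ℝ) :
    Summable fun α => wt d σ α * ‖kerCoeff d σ b x α‖ ^ 2 := by
  rw [← Complex.summable_ofReal]
  refine (hasSum_pi_prod_pow_div_factorial
    fun i => ((x i : ℂ) - b i) * ((x i : ℂ) - b i) / (σ : ℂ) ^ 2).summable.congr fun α => ?_
  rw [← wt_mul_kerCoeff_mul_conj_kerCoeff hσ, mul_assoc, Complex.mul_conj,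
    Complex.normSq_eq_norm_sq]
  push_cast
  rfl

end ExponentialKernel

/-- The RKHS of the exponential kernel
`k(x,y) = exp((x−b)ᵀ(y−b)/σ²)` on `ℝ^d` consists of the power series
`h(x) = Σ_α a_α (x−b)^α` with `Σ_α σ^{2|α|} α! |a_α|² < ∞`, equipped with the inner
product `⟨h, g⟩ = Σ_α σ^{2|α|} α! a_α conj(b_α)`.  Concretely: the coefficient family
`κ_x` of `k_x` satisfies the membership condition, the pairing `⟨h, k_x⟩` is a convergent
series equal to `h(x) = Σ_α a_α (x−b)^α`, and `⟨k_y, k_x⟩` recovers the kernel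
`exp((x−b)ᵀ(y−b)/σ²)`. -/
theorem exponential_kernel_RKHS
    (d : ℕ) (σ : ℝ) (hσ : 0 < σ) (b : Fin d → ℝ)
    (a : (Fin d → ℕ) → ℂ)
    (ha : Summable fun α : Fin d → ℕ => wt d σ α * ‖a α‖ ^ 2)
    (x y : Fin d → ℝ) :
    (Summable fun α : Fin d → ℕ => wt d σ α * ‖kerCoeff d σ b x α‖ ^ 2) ∧
    (Summable fun α : Fin d → ℕ =>
      (wt d σ α : ℂ) * a α * conj (kerCoeff d σ b x α)) ∧
    ((∑' α : Fin d → ℕ, (wt d σ α : ℂ) * a α * conj (kerCoeff d σ b x α))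
      = ∑' α : Fin d → ℕ, a α * mono d x b α) ∧
    ((∑' α : Fin d → ℕ,
        (wt d σ α : ℂ) * kerCoeff d σ b y α * conj (kerCoeff d σ b x α))
      = Complex.exp (((∑ i, (x i - b i) * (y i - b i)) / σ ^ 2 : ℝ) : ℂ)) := by
  have hkx := summable_wt_mul_norm_kerCoeff_sq (b := b) hσ.ne' x
  refine ⟨hkx, summable_mul_mul_conj (fun α => (wt_pos hσ.ne' α).le) ha hkx,
    tsum_congr fun α => wt_mul_mul_conj_kerCoeff hσ.ne' _ x α, ?_⟩
  rw [tsum_congr (wt_mul_kerCoeff_mul_conj_kerCoeff hσ.ne' x y),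
    (hasSum_pi_prod_pow_div_factorial _).tsum_eq]
  push_cast
  rw [Finset.sum_div]
end

section
/- The multiplication map 𝔪(h)(x) := h(x)·exp(−‖x−b‖²/(2σ²)) defines a unitary isomorphism from the RKHS of the exponential kernel exp((x−b)^⊤(y−b)/σ²) onto the RKHS of the Gaussian kernel exp(−‖x−y‖²/(2σ²)), and satisfies 𝔪(k^e_p) = e^{‖p−b‖²/(2σ²)} · k^g_p for all p ∈ ℝ^d. -/
open scoped BigOperators

open Finsupp in
private lemma inner_linearCombination_expand {ι G : Type*} [NormedAddCommGroup G]
    [InnerProductSpace ℂ G] (f : ι → G) (v v' : ι →₀ ℂ) :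
    (inner ℂ (Finsupp.linearCombination ℂ f v) (Finsupp.linearCombination ℂ f v') : ℂ)
      = ∑ i ∈ v.support, ∑ j ∈ v'.support,
          (starRingEnd ℂ) (v i) * v' j * inner ℂ (f i) (f j) := by
  rw [Finsupp.linearCombination_apply, Finsupp.linearCombination_apply, Finsupp.sum,
    Finsupp.sum, sum_inner]
  refine Finset.sum_congr rfl fun i _ => ?_
  rw [inner_sum]
  refine Finset.sum_congr rfl fun j _ => ?_
  rw [inner_smul_left, inner_smul_right]; ring

/-- If two families have the same Gram matrix and the first has dense span, there is a
continuous linear map sending one family to the other, isometric everywhere. -/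
private lemma exists_clm_of_inner_eq {ι E F : Type*}
    [NormedAddCommGroup E] [InnerProductSpace ℂ E]
    [NormedAddCommGroup F] [InnerProductSpace ℂ F] [CompleteSpace F]
    (u : ι → E) (w : ι → F)
    (h : ∀ p q : ι, (inner ℂ (u p) (u q) : ℂ) = inner ℂ (w p) (w q))
    (hdE : Dense ((Submodule.span ℂ (Set.range u) : Submodule ℂ E) : Set E)) :
    ∃ T : E →L[ℂ] F, (∀ p, T (u p) = w p) ∧ (∀ x, ‖T x‖ = ‖x‖) := by
  set Tu := Finsupp.linearCombination ℂ u with hTu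
  set Tw := Finsupp.linearCombination ℂ w with hTw
  have hinner : ∀ v v' : ι →₀ ℂ, (inner ℂ (Tu v) (Tu v') : ℂ) = inner ℂ (Tw v) (Tw v') := by
    intro v v'
    rw [hTu, hTw, inner_linearCombination_expand, inner_linearCombination_expand]
    exact Finset.sum_congr rfl fun i _ => Finset.sum_congr rfl fun j _ => by rw [h]
  have hnorm : ∀ v : ι →₀ ℂ, ‖Tw v‖ = ‖Tu v‖ := by
    intro v
    have h2 := hinner v v
    rw [inner_self_eq_norm_sq_to_K, inner_self_eq_norm_sq_to_K] at h2
    have h3 : ‖Tu v‖ ^ 2 = ‖Tw v‖ ^ 2 := by exact_mod_cast h2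
    rw [← Real.sqrt_sq (norm_nonneg (Tw v)), ← Real.sqrt_sq (norm_nonneg (Tu v)), h3]
  have hker : LinearMap.ker Tu ≤ LinearMap.ker Tw := by
    intro v hv
    rw [LinearMap.mem_ker] at hv ⊢
    have := hnorm v
    rw [hv, norm_zero] at this
    exact norm_eq_zero.mp this
  set L0 : (LinearMap.range Tu) →ₗ[ℂ] F :=
    ((LinearMap.ker Tu).liftQ Tw hker).comp (Tu.quotKerEquivRange).symm.toLinearMap with hL0def
  have hL0 : ∀ v : ι →₀ ℂ, L0 ⟨Tu v, LinearMap.mem_range_self Tu v⟩ = Tw v := by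
    intro v
    rw [hL0def]
    simp only [LinearMap.coe_comp, Function.comp_apply, LinearEquiv.coe_toLinearMap]
    rw [LinearMap.quotKerEquivRange_symm_apply_image, Submodule.mkQ_apply,
      Submodule.liftQ_apply]
  have hL0norm : ∀ y : LinearMap.range Tu, ‖L0 y‖ = ‖y‖ := by
    rintro ⟨_, v, rfl⟩
    rw [hL0 v]
    exact (hnorm v)
  set Lc : (LinearMap.range Tu) →L[ℂ] F :=
    L0.mkContinuous 1 (fun y => by rw [hL0norm y, one_mul]) with hLc
  have hLcapp : ∀ y, Lc y = L0 y := fun y => rfl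
  set e : (LinearMap.range Tu : Submodule ℂ E) →L[ℂ] E := (LinearMap.range Tu).subtypeL with he
  have h_e : IsUniformInducing e := isUniformEmbedding_subtype_val.isUniformInducing
  have hrange : (LinearMap.range Tu : Set E)
      = ((Submodule.span ℂ (Set.range u) : Submodule ℂ E) : Set E) := by
    rw [hTu, Finsupp.range_linearCombination]
  have h_dense : DenseRange e := by
    have : Set.range e = (LinearMap.range Tu : Set E) := Subtype.range_coe
    rw [DenseRange, this, hrange]
    exact hdE
  refine ⟨Lc.extend e, ?_, ?_⟩
  · intro p
    have hsingle : Tu (Finsupp.single p 1) = u p := by simp [hTu]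
    have hmem : u p ∈ LinearMap.range Tu := ⟨Finsupp.single p 1, hsingle⟩
    have h1 : Lc.extend e (u p) = Lc ⟨u p, hmem⟩ := by
      have := ContinuousLinearMap.extend_eq Lc h_dense h_e ⟨u p, hmem⟩
      exact this
    have h2 : (⟨u p, hmem⟩ : LinearMap.range Tu)
        = ⟨Tu (Finsupp.single p 1), ⟨Finsupp.single p 1, rfl⟩⟩ := Subtype.ext hsingle.symm
    rw [h1, h2, hLcapp, hL0]
    simp [hTw]
  · have hclosed : IsClosed {x : E | ‖Lc.extend e x‖ = ‖x‖} :=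
      isClosed_eq (Lc.extend e).continuous.norm continuous_norm
    have hsub : ((Submodule.span ℂ (Set.range u) : Submodule ℂ E) : Set E)
        ⊆ {x : E | ‖Lc.extend e x‖ = ‖x‖} := by
      intro x hx
      rw [← hrange] at hx
      obtain ⟨v, rfl⟩ := hx
      have h1 : Lc.extend e (Tu v) = Lc ⟨Tu v, ⟨v, rfl⟩⟩ := by
        have := ContinuousLinearMap.extend_eq Lc h_dense h_e ⟨Tu v, ⟨v, rfl⟩⟩
        exact this
      show ‖Lc.extend e (Tu v)‖ = ‖Tu v‖
      rw [h1, hLcapp, hL0, hnorm]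
    intro x
    have hx : x ∈ closure ((Submodule.span ℂ (Set.range u) : Submodule ℂ E) : Set E) := by
      rw [hdE.closure_eq]; trivial
    exact closure_minimal hsub hclosed hx

/-- Two families with the same Gram matrix and dense spans give a unitary map. -/
private lemma exists_isometryEquiv_of_inner_eq {ι E F : Type*}
    [NormedAddCommGroup E] [InnerProductSpace ℂ E] [CompleteSpace E]
    [NormedAddCommGroup F] [InnerProductSpace ℂ F] [CompleteSpace F]
    (u : ι → E) (w : ι → F)
    (h : ∀ p q : ι, (inner ℂ (u p) (u q) : ℂ) = inner ℂ (w p) (w q))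
    (hdE : Dense ((Submodule.span ℂ (Set.range u) : Submodule ℂ E) : Set E))
    (hdF : Dense ((Submodule.span ℂ (Set.range w) : Submodule ℂ F) : Set F)) :
    ∃ U : E ≃ₗᵢ[ℂ] F, ∀ p, U (u p) = w p := by
  obtain ⟨T, hT, hTn⟩ := exists_clm_of_inner_eq u w h hdE
  obtain ⟨S, hS, hSn⟩ := exists_clm_of_inner_eq w u (fun p q => (h p q).symm) hdF
  have hST : S.comp T = ContinuousLinearMap.id ℂ E := by
    apply ContinuousLinearMap.ext_on hdE
    rintro _ ⟨p, rfl⟩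
    simp [hT, hS]
  have hTS : T.comp S = ContinuousLinearMap.id ℂ F := by
    apply ContinuousLinearMap.ext_on hdF
    rintro _ ⟨p, rfl⟩
    simp [hT, hS]
  have h1 : (T : E →ₗ[ℂ] F) ∘ₗ (S : F →ₗ[ℂ] E) = LinearMap.id := by
    rw [← ContinuousLinearMap.toLinearMap_comp, hTS]; rfl
  have h2 : (S : F →ₗ[ℂ] E) ∘ₗ (T : E →ₗ[ℂ] F) = LinearMap.id := by
    rw [← ContinuousLinearMap.toLinearMap_comp, hST]; rfl
  refine ⟨{ toLinearEquiv := LinearEquiv.ofLinear (T : E →ₗ[ℂ] F) (S : F →ₗ[ℂ] E) h1 h2,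
            norm_map' := fun x => hTn x }, fun p => hT p⟩

/-- The multiplication map `𝔪(h)(x) = h(x)·exp(−‖x−b‖²/(2σ²))` defines
a unitary (linear isometric) isomorphism from the RKHS of the exponential kernel
`exp((x−b)ᵀ(y−b)/σ²)` onto the RKHS of the Gaussian kernel `exp(−‖x−y‖²/(2σ²))`, and it
sends the kernel section `k^e_p` to `e^{‖p−b‖²/(2σ²)} · k^g_p` for every `p ∈ ℝ^d`.
(The two RKHSs are given abstractly via realizations `Φe, Φg`, kernel sections `ke, kg`,
the reproducing property, the kernel formulas, injectivity of the realizations, and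
density of the spans of the kernel sections.) -/
theorem multiplication_unitary_exponential_to_gaussian
    (d : ℕ) (σ : ℝ) (hσ : 0 < σ) (b : Fin d → ℝ)
    (He : Type*) [NormedAddCommGroup He] [InnerProductSpace ℂ He] [CompleteSpace He]
    (Hg : Type*) [NormedAddCommGroup Hg] [InnerProductSpace ℂ Hg] [CompleteSpace Hg]
    (Φe : He →ₗ[ℂ] ((Fin d → ℝ) → ℂ)) (Φg : Hg →ₗ[ℂ] ((Fin d → ℝ) → ℂ))
    (hinjE : Function.Injective Φe) (hinjG : Function.Injective Φg)
    (ke : (Fin d → ℝ) → He) (kg : (Fin d → ℝ) → Hg)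
    (hreproE : ∀ (h : He) (x : Fin d → ℝ), Φe h x = (inner ℂ (ke x) h : ℂ))
    (hreproG : ∀ (h : Hg) (x : Fin d → ℝ), Φg h x = (inner ℂ (kg x) h : ℂ))
    (hkerE : ∀ x y : Fin d → ℝ,
      Φe (ke y) x = Complex.exp (((∑ i, (x i - b i) * (y i - b i)) / σ ^ 2 : ℝ) : ℂ))
    (hkerG : ∀ x y : Fin d → ℝ,
      Φg (kg y) x = Complex.exp ((-(∑ i, (x i - y i) ^ 2) / (2 * σ ^ 2) : ℝ) : ℂ))
    (hdenseE : Dense ((Submodule.span ℂ (Set.range ke) : Submodule ℂ He) : Set He))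
    (hdenseG : Dense ((Submodule.span ℂ (Set.range kg) : Submodule ℂ Hg) : Set Hg)) :
    ∃ U : He ≃ₗᵢ[ℂ] Hg,
      (∀ (h : He) (x : Fin d → ℝ),
        Φg (U h) x = Φe h x *
          Complex.exp ((-(∑ i, (x i - b i) ^ 2) / (2 * σ ^ 2) : ℝ) : ℂ)) ∧
      (∀ p : Fin d → ℝ,
        U (ke p) = (Real.exp ((∑ i, (p i - b i) ^ 2) / (2 * σ ^ 2)) : ℂ) • kg p) := by
  have hσ2 : σ ^ 2 ≠ 0 := pow_ne_zero 2 hσ.ne'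
  set c : (Fin d → ℝ) → ℂ :=
    fun p => ((Real.exp ((∑ i, (p i - b i) ^ 2) / (2 * σ ^ 2)) : ℝ) : ℂ) with hc
  have hcval : ∀ p, c p = Complex.exp (((∑ i, (p i - b i) ^ 2) / (2 * σ ^ 2) : ℝ) : ℂ) := by
    intro p; simp only [hc]; exact Complex.ofReal_exp _
  have hcne : ∀ p, c p ≠ 0 := fun p => by
    rw [hcval]; exact Complex.exp_ne_zero _
  have hcreal : ∀ p, (starRingEnd ℂ) (c p) = c p := fun p => by
    simp only [hc]; exact Complex.conj_ofReal _
  have innerE : ∀ p q, (inner ℂ (ke p) (ke q) : ℂ)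
      = Complex.exp (((∑ i, (p i - b i) * (q i - b i)) / σ ^ 2 : ℝ) : ℂ) := by
    intro p q; rw [← hreproE, hkerE]
  have innerG : ∀ p q, (inner ℂ (kg p) (kg q) : ℂ)
      = Complex.exp ((-(∑ i, (p i - q i) ^ 2) / (2 * σ ^ 2) : ℝ) : ℂ) := by
    intro p q; rw [← hreproG, hkerG]
  -- key real identities
  have hkey : ∀ p q : Fin d → ℝ,
      ((∑ i, (p i - b i) ^ 2) / (2 * σ ^ 2)) + ((∑ i, (q i - b i) ^ 2) / (2 * σ ^ 2))
        + (-(∑ i, (p i - q i) ^ 2) / (2 * σ ^ 2))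
      = (∑ i, (p i - b i) * (q i - b i)) / σ ^ 2 := by
    intro p q
    have hsum : (∑ i, (p i - b i) ^ 2) + (∑ i, (q i - b i) ^ 2) - (∑ i, (p i - q i) ^ 2)
        = 2 * ∑ i, (p i - b i) * (q i - b i) := by
      rw [Finset.mul_sum, ← Finset.sum_add_distrib, ← Finset.sum_sub_distrib]
      exact Finset.sum_congr rfl fun i _ => by ring
    field_simp
    linear_combination hsum
  have hkey2 : ∀ x p : Fin d → ℝ,
      ((∑ i, (p i - b i) ^ 2) / (2 * σ ^ 2)) + (-(∑ i, (x i - p i) ^ 2) / (2 * σ ^ 2))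
      = (-(∑ i, (x i - b i) ^ 2) / (2 * σ ^ 2)) + (∑ i, (x i - b i) * (p i - b i)) / σ ^ 2 := by
    intro x p
    have hsum : (∑ i, (p i - b i) ^ 2) - (∑ i, (x i - p i) ^ 2) + (∑ i, (x i - b i) ^ 2)
        = 2 * ∑ i, (x i - b i) * (p i - b i) := by
      rw [Finset.mul_sum, ← Finset.sum_sub_distrib, ← Finset.sum_add_distrib]
      exact Finset.sum_congr rfl fun i _ => by ring
    field_simp
    linear_combination hsum
  -- Gram matrices agree
  have hGram : ∀ p q, (inner ℂ (ke p) (ke q) : ℂ) = inner ℂ (c p • kg p) (c q • kg q) := by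
    intro p q
    rw [inner_smul_left, inner_smul_right, innerG, innerE, hcreal, hcval p, hcval q,
      ← Complex.exp_add, ← Complex.exp_add]
    congr 1
    norm_cast
    linarith [hkey p q]
  -- density of the scaled family span
  have hspan : (Submodule.span ℂ (Set.range fun p => c p • kg p) : Submodule ℂ Hg)
      = Submodule.span ℂ (Set.range kg) := by
    apply le_antisymm
    · rw [Submodule.span_le]
      rintro _ ⟨p, rfl⟩
      exact Submodule.smul_mem _ _ (Submodule.subset_span ⟨p, rfl⟩)
    · rw [Submodule.span_le]
      rintro _ ⟨p, rfl⟩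
      have : kg p = (c p)⁻¹ • (c p • kg p) := by
        rw [smul_smul, inv_mul_cancel₀ (hcne p), one_smul]
      rw [this]
      exact Submodule.smul_mem _ _ (Submodule.subset_span ⟨p, rfl⟩)
  have hdense' : Dense ((Submodule.span ℂ (Set.range fun p => c p • kg p)
      : Submodule ℂ Hg) : Set Hg) := by rw [hspan]; exact hdenseG
  obtain ⟨U, hU⟩ := exists_isometryEquiv_of_inner_eq ke (fun p => c p • kg p) hGram hdenseE hdense'
  refine ⟨U, ?_, fun p => hU p⟩
  intro h x
  set C := Complex.exp ((-(∑ i, (x i - b i) ^ 2) / (2 * σ ^ 2) : ℝ) : ℂ) with hC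
  set Uc : He →L[ℂ] Hg := U.toLinearIsometry.toContinuousLinearMap with hUc
  have hUcapp : ∀ y, Uc y = U y := fun y => rfl
  have hAB : (innerSL ℂ (kg x)).comp Uc = C • (innerSL ℂ (ke x)) := by
    apply ContinuousLinearMap.ext_on hdenseE
    rintro _ ⟨p, rfl⟩
    simp only [ContinuousLinearMap.coe_comp', Function.comp_apply,
      ContinuousLinearMap.smul_apply, innerSL_apply_apply, hUcapp, hU p]
    rw [inner_smul_right, innerG, innerE, hC, hcval p, smul_eq_mul,
      ← Complex.exp_add, ← Complex.exp_add]
    congr 1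
    norm_cast
    linarith [hkey2 x p]
  have happ := ContinuousLinearMap.ext_iff.mp hAB h
  simp only [ContinuousLinearMap.coe_comp', Function.comp_apply,
    ContinuousLinearMap.smul_apply, innerSL_apply_apply, hUcapp, smul_eq_mul] at happ
  rw [hreproG, hreproE, happ, mul_comm]
end

section
/- Let T : H → H be a densely defined operator whose adjoint T* leaves invariant an increasing sequence of finite-dimensional subspaces V_n ⊆ V_{n+1} with ∪_n V_n dense in H. If for every n the restriction T*|_{V_n} is diagonalizable with eigenvalues that are pairwise distinct within each V_n, then there exist families {w_i} ⊆ ∪V_n and {u_{i,n}} (with u_{i,n} ∈ V_n, π_{n+1,n} u_{i,n+1} = u_{i,n}) such that T* w_i = conj(γ_i) w_i, (T*|_{V_n})^* u_{i,n} = γ_i u_{i,n}, and ⟨w_i, u_{j,n}⟩_H = δ_{ij} for all i, j ≤ dim V_n. -/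
lemma exists_nested_enumeration {α : Type*} [DecidableEq α] [Inhabited α]
    (E : ℕ → Finset α) (hsub : ∀ n, E n ⊆ E (n + 1)) :
    ∃ f : ℕ → α, ∀ n, (Finset.range (E n).card).image f = E n := by
  classical
  set c : ℕ → ℕ := fun n => (E n).card with hc
  -- the one-step extension
  have key : ∀ (n : ℕ) (g : ℕ → α), (Finset.range (c n)).image g = E n →
      ∃ g' : ℕ → α, (∀ i < c n, g' i = g i) ∧
        (Finset.range (c (n+1))).image g' = E (n+1) := by
    intro n g hg
    have hcle : c n ≤ c (n + 1) := Finset.card_le_card (hsub n)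
    have hcard : (E (n+1) \ E n).card = c (n+1) - c n := by
      rw [Finset.card_sdiff_of_subset (hsub n)]
    refine ⟨fun i => if h : i < c n then g i else
        (if h2 : i - c n < (E (n+1) \ E n).card
          then ((E (n+1) \ E n).equivFin.symm ⟨i - c n, h2⟩ : α) else default),
      fun i hi => by simp [hi], ?_⟩
    have hsplit : Finset.range (c (n+1)) = Finset.range (c n) ∪ Finset.Ico (c n) (c (n+1)) := by
      simp only [Finset.range_eq_Ico]
      exact (Finset.Ico_union_Ico_eq_Ico (Nat.zero_le _) hcle).symm
    rw [hsplit, Finset.image_union]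
    have h1 : (Finset.range (c n)).image (fun i => if h : i < c n then g i else
        (if h2 : i - c n < (E (n+1) \ E n).card
          then ((E (n+1) \ E n).equivFin.symm ⟨i - c n, h2⟩ : α) else default)) = E n := by
      rw [← hg]
      apply Finset.image_congr
      intro i hi
      simp only [Finset.coe_range, Set.mem_Iio] at hi
      simp [hi]
    have h2 : (Finset.Ico (c n) (c (n+1))).image (fun i => if h : i < c n then g i else
        (if h2 : i - c n < (E (n+1) \ E n).card
          then ((E (n+1) \ E n).equivFin.symm ⟨i - c n, h2⟩ : α) else default))
        = E (n+1) \ E n := by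
      ext a
      simp only [Finset.mem_image, Finset.mem_Ico]
      constructor
      · rintro ⟨i, ⟨hi1, hi2⟩, rfl⟩
        have hnot : ¬ i < c n := not_lt.mpr hi1
        have hlt : i - c n < (E (n+1) \ E n).card := by omega
        simp only [hnot, dif_neg, not_false_iff, hlt, dif_pos]
        exact Finset.coe_mem _
      · intro ha
        set k := (E (n+1) \ E n).equivFin ⟨a, ha⟩ with hk
        refine ⟨c n + k.1, ⟨Nat.le_add_right _ _, by omega⟩, ?_⟩
        have hnot : ¬ c n + k.1 < c n := by omega
        have hlt : c n + k.1 - c n < (E (n+1) \ E n).card := by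
          simpa using k.2
        simp only [hnot, dif_neg, not_false_iff, hlt, dif_pos]
        have : (⟨c n + k.1 - c n, hlt⟩ : Fin (E (n+1) \ E n).card) = k := by
          ext; simp
        rw [this, hk, Equiv.symm_apply_apply]
    rw [h1, h2, Finset.union_sdiff_of_subset (hsub n)]
  -- build the tower by recursion
  have base : (Finset.range (c 0)).image (fun i =>
      if h : i < c 0 then ((E 0).equivFin.symm ⟨i, h⟩ : α) else default) = E 0 := by
    ext a
    simp only [Finset.mem_image, Finset.mem_range]
    constructor
    · rintro ⟨i, hi, rfl⟩
      simp only [hi, dif_pos]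
      exact Finset.coe_mem _
    · intro ha
      refine ⟨(E 0).equivFin ⟨a, ha⟩, ((E 0).equivFin ⟨a, ha⟩).2, ?_⟩
      simp only [show ((E 0).equivFin ⟨a, ha⟩ : ℕ) < c 0 from ((E 0).equivFin ⟨a, ha⟩).2, dif_pos]
      rw [Fin.eta, Equiv.symm_apply_apply]
  choose step hstep1 hstep2 using key
  let F : ∀ _ : ℕ, {g : ℕ → α // (Finset.range (c _)).image g = E _} := fun n => Nat.rec
    (motive := fun n => {g : ℕ → α // (Finset.range (c n)).image g = E n})
    ⟨_, base⟩ (fun n p => ⟨step n p.1 p.2, hstep2 n p.1 p.2⟩) n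
  have hFsucc : ∀ n, ∀ i < c n, (F (n+1)).1 i = (F n).1 i := fun n =>
    hstep1 n (F n).1 (F n).2
  have hagree : ∀ n m, m ≤ n → ∀ i, i < c m → (F n).1 i = (F m).1 i := by
    intro n
    induction n with
    | zero =>
      intro m hmn i hi
      have : m = 0 := by omega
      subst this; rfl
    | succ n ih =>
      intro m hmn i hi
      rcases Nat.lt_or_ge m (n+1) with h | h
      · have hmn' : m ≤ n := by omega
        have hcm : c m ≤ c n := by
          have hEmn : E m ⊆ E n := by
            clear * - hsub hmn'
            induction hmn' with
            | refl => exact fun _ h => h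
            | step h ih => exact fun x hx => hsub _ (ih hx)
          exact Finset.card_le_card hEmn
        rw [hFsucc n i (lt_of_lt_of_le hi hcm)]
        exact ih m hmn' i hi
      · have : m = n + 1 := by omega
        subst this; rfl
  refine ⟨fun i => if h : ∃ n, i < c n then (F (Nat.find h)).1 i else default, fun n => ?_⟩
  show Finset.image _ (Finset.range (c n)) = E n
  rw [← (F n).2]
  apply Finset.image_congr
  intro i hi
  simp only [Finset.coe_range, Set.mem_Iio] at hi
  have h : ∃ n, i < c n := ⟨n, hi⟩
  simp only [h, dif_pos]
  exact (hagree n (Nat.find h) (Nat.find_min' h hi) i (Nat.find_spec h)).symm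

/-- Let `T` be a densely defined operator on a Hilbert space `H` whose
adjoint `T*` leaves invariant an increasing sequence of finite-dimensional subspaces
`V n` with dense union (the restriction of `T*` to `V n` being recorded as the
endomorphism `S n`).  If every `S n = T*|_{V n}` is diagonalizable with pairwise distinct
eigenvalues within each `V n` (all eigenspaces of dimension ≤ 1), then there exist a
family of eigenvalues `γ`, eigenvectors `w i ∈ ∪_n V n` of `T*` with
`T* w_i = conj(γ_i) w_i`, and projectively compatible families `u n i ∈ V n` with
`(T*|_{V n})^* u_{i,n} = γ_i u_{i,n}`, `π_{n+1,n} u_{i,n+1} = u_{i,n}`, and the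
biorthogonality `⟨w_i, u_{j,n}⟩ = δ_{ij}` for `i, j < dim V n`. -/
theorem eigen_system_of_projective_restrictions
    (H : Type*) [NormedAddCommGroup H] [InnerProductSpace ℂ H] [CompleteSpace H]
    (T : H →ₗ.[ℂ] H) (hdense : Dense (T.domain : Set H))
    (V : ℕ → Submodule ℂ H) [∀ n, FiniteDimensional ℂ (V n)]
    (hmono : ∀ n, V n ≤ V (n + 1))
    (hVdense : Dense (((⨆ n, V n : Submodule ℂ H)) : Set H))
    (hVdom : ∀ (n : ℕ) (u : H), u ∈ V n → u ∈ T.adjoint.domain)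
    (S : ∀ n, Module.End ℂ (V n))
    (hS : ∀ (n : ℕ) (v : V n), ((S n v : V n) : H) = T.adjoint ⟨(v : H), hVdom n v v.2⟩)
    (hdiag : ∀ n, (⨆ μ : ℂ, Module.End.eigenspace (S n) μ) = ⊤)
    (hdistinct : ∀ (n : ℕ) (μ : ℂ),
      Module.finrank ℂ (Module.End.eigenspace (S n) μ) ≤ 1) :
    ∃ (γ : ℕ → ℂ) (w : ℕ → H) (u : ∀ n, ℕ → V n),
      (∀ n i, i < Module.finrank ℂ (V n) → w i ∈ V n) ∧
      (∀ i : ℕ, ∃ (n : ℕ) (hw : w i ∈ V n),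
        T.adjoint ⟨w i, hVdom n (w i) hw⟩ = (starRingEnd ℂ) (γ i) • w i) ∧
      (∀ n i, i < Module.finrank ℂ (V n) →
        LinearMap.adjoint (S n) (u n i) = γ i • u n i) ∧
      (∀ n i, i < Module.finrank ℂ (V n) →
        (V n).orthogonalProjectionOnto ((u (n + 1) i : H)) = u n i) ∧
      (∀ n i j, i < Module.finrank ℂ (V n) → j < Module.finrank ℂ (V n) →
        (inner ℂ ((u n j : H)) (w i) : ℂ) = if i = j then 1 else 0) := by

  classical
  -- monotone
  have hVle : ∀ m n, m ≤ n → V m ≤ V n := by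
    intro m n hmn
    induction hmn with
    | refl => exact le_rfl
    | step h ih => exact le_trans ih (hmono _)
  have hdmono : ∀ m n, m ≤ n → Module.finrank ℂ (V m) ≤ Module.finrank ℂ (V n) :=
    fun m n hmn => Submodule.finrank_mono (hVle m n hmn)
  -- compatibility of the S n
  have hSrestrict : ∀ m n (hmn : m ≤ n) (x : V m) (μ : ℂ), S m x = μ • x →
      S n ⟨(x : H), hVle m n hmn x.2⟩ = μ • (⟨(x : H), hVle m n hmn x.2⟩ : V n) := by
    intro m n hmn x μ hx
    apply Subtype.ext
    have h1 := hS n ⟨(x : H), hVle m n hmn x.2⟩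
    have h2 := hS m x
    have hdomeq : (⟨((⟨(x : H), hVle m n hmn x.2⟩ : V n) : H),
        hVdom n _ (hVle m n hmn x.2)⟩ : T.adjoint.domain)
        = ⟨(x : H), hVdom m _ x.2⟩ := Subtype.ext rfl
    rw [hdomeq] at h1
    show ((S n ⟨(x : H), hVle m n hmn x.2⟩ : V n) : H) = μ • (x : H)
    rw [h1, ← h2, hx]
    rfl
  -- eigenvalue sets are finite with card = finrank
  have hEig : ∀ n, ∃ E : Finset ℂ, (∀ μ : ℂ, μ ∈ E ↔ Module.End.HasEigenvalue (S n) μ) ∧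
      E.card = Module.finrank ℂ (V n) := by
    intro n
    set Es : Set ℂ := {μ : ℂ | Module.End.HasEigenvalue (S n) μ} with hEs
    have hev : ∀ μ : Es, ∃ x : V n, (S n).HasEigenvector (μ : ℂ) x :=
      fun μ => Module.End.HasEigenvalue.exists_hasEigenvector μ.2
    choose ev hev using hev
    have hli : LinearIndependent ℂ ev :=
      Module.End.eigenvectors_linearIndependent (S n) Es ev hev
    have : Finite Es := hli.finite
    have hfin : Es.Finite := Set.finite_coe_iff.mp this
    haveI : Fintype Es := hfin.fintype
    -- spanning
    have hspan : Submodule.span ℂ (Set.range ev) = ⊤ := by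
      refine le_antisymm le_top ?_
      rw [← hdiag n]
      refine iSup_le fun μ => ?_
      by_cases h : Module.End.HasEigenvalue (S n) μ
      · have h1 : (ℂ ∙ ev ⟨μ, h⟩) ≤ Module.End.eigenspace (S n) μ :=
          (Submodule.span_singleton_le_iff_mem _ _).mpr (hev ⟨μ, h⟩).1
        have h2 : Module.finrank ℂ (Module.End.eigenspace (S n) μ) ≤
            Module.finrank ℂ (ℂ ∙ ev ⟨μ, h⟩) := by
          rw [finrank_span_singleton (hev ⟨μ, h⟩).2]
          exact hdistinct n μ
        have heq := Submodule.eq_of_le_of_finrank_le h1 h2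
        rw [← heq]
        exact Submodule.span_mono (by
          rintro x hx
          rcases hx with rfl
          exact ⟨⟨μ, h⟩, rfl⟩)
      · have : Module.End.eigenspace (S n) μ = ⊥ := not_not.mp h
        rw [this]
        exact bot_le
    let b : Module.Basis Es ℂ (V n) := Module.Basis.mk hli (le_of_eq hspan.symm)
    refine ⟨hfin.toFinset, fun μ => by simp [hEs], ?_⟩
    rw [Set.Finite.card_toFinset]
    exact (Module.finrank_eq_card_basis b).symm
  choose E hE1 hE2 using hEig
  have hEsub : ∀ n, E n ⊆ E (n + 1) := by
    intro n μ hμ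
    rw [hE1] at hμ ⊢
    obtain ⟨x, hx⟩ := hμ.exists_hasEigenvector
    have hx' := hSrestrict n (n+1) (Nat.le_succ n) x μ hx.apply_eq_smul
    exact Module.End.hasEigenvalue_of_hasEigenvector
      ⟨by rw [Module.End.mem_eigenspace_iff]; exact hx', by
        simp only [ne_eq, Submodule.mk_eq_zero]
        exact fun h => hx.2 (by exact_mod_cast Subtype.ext h)⟩
  obtain ⟨lam, hlam⟩ := exists_nested_enumeration E hEsub
  have hlam' : ∀ n, (Finset.range (Module.finrank ℂ (V n))).image lam = E n := by
    intro n; rw [← hE2 n]; exact hlam n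
  have hmemE : ∀ n i, i < Module.finrank ℂ (V n) → Module.End.HasEigenvalue (S n) (lam i) := by
    intro n i hi
    rw [← hE1]
    rw [← hlam' n]
    exact Finset.mem_image_of_mem lam (Finset.mem_range.mpr hi)
  have hlaminj : ∀ n, Set.InjOn lam (Finset.range (Module.finrank ℂ (V n))) := by
    intro n
    rw [← Finset.card_image_iff, hlam' n, hE2 n, Finset.card_range]
  -- choose the eigenvectors w
  set d : ℕ → ℕ := fun n => Module.finrank ℂ (V n) with hd
  let w : ℕ → H := fun i =>
    if h : ∃ n, i < d n then
      (((hmemE (Nat.find h) i (Nat.find_spec h)).exists_hasEigenvector.choose : V (Nat.find h)) : H)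
    else 0
  have hw : ∀ n i, i < d n → ∃ hm : w i ∈ V n,
      w i ≠ 0 ∧ S n ⟨w i, hm⟩ = lam i • (⟨w i, hm⟩ : V n) := by
    intro n i hi
    have h : ∃ n, i < d n := ⟨n, hi⟩
    have hfind := Nat.find_min' h hi
    have hx := (hmemE (Nat.find h) i (Nat.find_spec h)).exists_hasEigenvector.choose_spec
    have hwi : w i = ((hmemE (Nat.find h) i
        (Nat.find_spec h)).exists_hasEigenvector.choose : H) := dif_pos h
    have hm : w i ∈ V n := by
      rw [hwi]; exact hVle _ n hfind (Subtype.coe_prop _)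
    refine ⟨hm, ?_, ?_⟩
    · rw [hwi]
      simpa using hx.2
    · have := hSrestrict (Nat.find h) n hfind _ (lam i) hx.apply_eq_smul
      convert this using 2 <;> exact Subtype.ext hwi
  -- basis of eigenvectors of each V n
  have hBex : ∀ n, 0 < d n → ∃ B : Module.Basis (Fin (d n)) ℂ (V n),
      ∀ i : Fin (d n), B i = (⟨w i, (hw n i i.2).choose⟩ : V n) := by
    intro n hn
    haveI : Nonempty (Fin (d n)) := ⟨⟨0, hn⟩⟩
    have hli : LinearIndependent ℂ (fun i : Fin (d n) => (⟨w i, (hw n i i.2).choose⟩ : V n)) := by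
      apply Module.End.eigenvectors_linearIndependent' (S n) (fun i : Fin (d n) => lam i)
      · intro i j hij
        refine Fin.ext (hlaminj n (Finset.mem_coe.mpr (Finset.mem_range.mpr i.2)) (Finset.mem_coe.mpr (Finset.mem_range.mpr j.2)) hij)
      · intro i
        refine ⟨Module.End.mem_eigenspace_iff.mpr (hw n i i.2).choose_spec.2, ?_⟩
        simp only [ne_eq, Submodule.mk_eq_zero]
        exact (hw n i i.2).choose_spec.1
    refine ⟨basisOfLinearIndependentOfCardEqFinrank hli (by simp [hd]), fun i => ?_⟩
    exact congrFun (coe_basisOfLinearIndependentOfCardEqFinrank hli _) i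
  choose B hB using hBex
  -- the dual vectors u
  let u : ∀ n, ℕ → V n := fun n i =>
    if h : i < d n then
      (InnerProductSpace.toDual ℂ (V n)).symm
        (LinearMap.toContinuousLinearMap ((B n (Nat.zero_lt_of_lt h)).dualBasis ⟨i, h⟩))
    else 0
  have huB : ∀ n i (hi : i < d n) (j : Fin (d n)),
      (inner ℂ (u n i) (B n (Nat.zero_lt_of_lt hi) j) : ℂ) = if (j : ℕ) = i then 1 else 0 := by
    intro n i hi j
    have hui : u n i = (InnerProductSpace.toDual ℂ (V n)).symm
        (LinearMap.toContinuousLinearMap ((B n (Nat.zero_lt_of_lt hi)).dualBasis ⟨i, hi⟩)) :=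
      dif_pos hi
    rw [hui, InnerProductSpace.toDual_symm_apply]
    simp [Module.Basis.dualBasis_apply_self, Finsupp.single_apply, Fin.ext_iff, eq_comm]
  have hu : ∀ n i j (hi : i < d n) (hj : j < d n),
      (inner ℂ ((u n i : H)) (w j) : ℂ) = if j = i then 1 else 0 := by
    intro n i j hi hj
    have hn : 0 < d n := Nat.zero_lt_of_lt hi
    have hBj : B n hn ⟨j, hj⟩ = (⟨w j, (hw n j hj).choose⟩ : V n) := hB n hn ⟨j, hj⟩
    have hcoe : (inner ℂ ((u n i : H)) (w j) : ℂ)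
        = inner ℂ (u n i) (⟨w j, (hw n j hj).choose⟩ : V n) := rfl
    rw [hcoe, ← hBj, huB n i hi ⟨j, hj⟩]
  -- extensionality against the basis
  have hext : ∀ n (hn : 0 < d n) (x y : V n),
      (∀ j : Fin (d n), (inner ℂ x (B n hn j) : ℂ) = inner ℂ y (B n hn j)) → x = y := by
    intro n hn x y hxy
    refine ext_inner_right ℂ fun v => ?_
    have h2 : (innerₛₗ ℂ x : V n →ₗ[ℂ] ℂ) = innerₛₗ ℂ y :=
      Module.Basis.ext (B n hn) (fun j => by simpa using hxy j)
    simpa using LinearMap.congr_fun h2 v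
  -- the adjoint eigenvector property
  have hadj : ∀ n i, i < d n →
      LinearMap.adjoint (S n) (u n i) = (starRingEnd ℂ) (lam i) • u n i := by
    intro n i hi
    have hn : 0 < d n := Nat.zero_lt_of_lt hi
    apply hext n hn
    intro j
    have hBj : B n hn j = (⟨w j, (hw n j j.2).choose⟩ : V n) := hB n hn j
    have hSBj : S n (B n hn j) = lam j • B n hn j := by
      rw [hBj]; exact (hw n j j.2).choose_spec.2
    rw [LinearMap.adjoint_inner_left, hSBj, inner_smul_right, inner_smul_left,
      huB n i hi j]
    by_cases h : (j : ℕ) = i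
    · subst h; simp
    · simp [h]
  -- compatibility with orthogonal projections
  have hproj : ∀ n i, i < d n →
      (V n).orthogonalProjectionOnto ((u (n + 1) i : H)) = u n i := by
    intro n i hi
    have hn : 0 < d n := Nat.zero_lt_of_lt hi
    have hi' : i < d (n + 1) := lt_of_lt_of_le hi (hdmono n (n + 1) (Nat.le_succ n))
    apply hext n hn
    intro j
    have hj' : (j : ℕ) < d (n + 1) := lt_of_lt_of_le j.2 (hdmono n (n + 1) (Nat.le_succ n))
    have hBcoe : ((B n hn j : V n) : H) = w j := congrArg _ (hB n hn j)
    rw [Submodule.inner_orthogonalProjectionOnto_eq_of_mem_right, hBcoe,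
      hu (n + 1) i j hi' hj', huB n i hi j]
  refine ⟨fun i => (starRingEnd ℂ) (lam i), w, u, ?_, ?_, ?_, ?_, ?_⟩
  · exact fun n i hi => (hw n i hi).choose
  · intro i
    by_cases h : ∃ n, i < d n
    · obtain ⟨n, hn⟩ := h
      refine ⟨n, (hw n i hn).choose, ?_⟩
      have h2 := (hw n i hn).choose_spec.2
      calc T.adjoint ⟨w i, hVdom n (w i) (hw n i hn).choose⟩
          = ((S n ⟨w i, (hw n i hn).choose⟩ : V n) : H) :=
            (hS n ⟨w i, (hw n i hn).choose⟩).symm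
        _ = ((lam i • (⟨w i, (hw n i hn).choose⟩ : V n) : V n) : H) := by rw [h2]
        _ = lam i • w i := rfl
        _ = (starRingEnd ℂ) ((starRingEnd ℂ) (lam i)) • w i := by simp
    · have hw0 : w i = 0 := dif_neg h
      refine ⟨0, hw0 ▸ (V 0).zero_mem, ?_⟩
      have hdom0 : (⟨w i, hVdom 0 (w i) (hw0 ▸ (V 0).zero_mem)⟩ : T.adjoint.domain) = 0 :=
        Subtype.ext hw0
      rw [hdom0, T.adjoint.map_zero, hw0, smul_zero]
  · intro n i hi
    exact hadj n i hi
  · intro n i hi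
    exact hproj n i hi
  · intro n i j hi hj
    exact hu n j i hj hi
end

section
/- Let C_f be a bounded Koopman operator on an RKHS H, V_n ⊆ H a finite-dimensional subspace invariant under C_f^*, and u a unit eigenvector of C_f^*|_{V_n}^* (the adjoint of the restriction within V_n) with eigenvalue λ. Then for every x in the domain: |u(f(x)) − λ u(x)| ≤ ‖C_f − λ I‖_op · ‖k_x − π_n k_x‖_H, where π_n is the orthogonal projection onto V_n. -/
/-- Let `C_f = T` be a bounded Koopman (composition) operator on an
RKHS `H` (realized via `Φ`, with kernel sections `kfun` and `Φ h x = ⟨k_x, h⟩`), let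
`V ⊆ H` be a finite-dimensional `C_f^*`-invariant subspace (the restriction recorded as
the endomorphism `S` of `V`), and let `u ∈ V` be a unit eigenvector of `(C_f^*|_V)^*`
with eigenvalue `λ`.  Then for every `x`:
`|u(f(x)) − λ u(x)| ≤ ‖C_f − λ I‖_op · ‖k_x − π_V k_x‖`. -/
theorem eigenvector_level_set_bound
    {X : Type*} (H : Type*) [NormedAddCommGroup H] [InnerProductSpace ℂ H]
    [CompleteSpace H]
    (Φ : H →ₗ[ℂ] (X → ℂ)) (kfun : X → H)
    (hrepro : ∀ (h : H) (x : X), Φ h x = (inner ℂ (kfun x) h : ℂ))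
    (f : X → X)
    (T : H →L[ℂ] H)
    (hKoop : ∀ (h : H) (x : X), Φ (T h) x = Φ h (f x))
    (V : Submodule ℂ H) [FiniteDimensional ℂ V]
    (hVinv : ∀ u ∈ V, (ContinuousLinearMap.adjoint T) u ∈ V)
    (S : Module.End ℂ V)
    (hS : ∀ v : V, ((S v : V) : H) = (ContinuousLinearMap.adjoint T) (v : H))
    (u : V) (hu : ‖u‖ = 1) (lam : ℂ)
    (heig : LinearMap.adjoint S u = lam • u) :
    ∀ x : X,
      ‖Φ (u : H) (f x) - lam * Φ (u : H) x‖
        ≤ ‖T - lam • (1 : H →L[ℂ] H)‖ *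
            ‖kfun x - ((Submodule.orthogonalProjection V (kfun x) : V) : H)‖ := by
  intro x
  set p : V := Submodule.orthogonalProjection V (kfun x) with hp
  set w : H := (T - lam • (1 : H →L[ℂ] H)) (u : H) with hwdef
  have hw : ∀ z : H, (inner ℂ z w : ℂ) = inner ℂ z (T (u : H)) - lam * inner ℂ z (u : H) := by
    intro z
    simp [hwdef, ContinuousLinearMap.sub_apply, ContinuousLinearMap.smul_apply,
      inner_sub_right, inner_smul_right]
  have hkey : (inner ℂ ((p : H)) w : ℂ) = 0 := by
    rw [hw]
    have h1 : (inner ℂ ((p : H)) (T (u : H)) : ℂ)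
        = inner ℂ ((ContinuousLinearMap.adjoint T) (p : H)) (u : H) :=
      (ContinuousLinearMap.adjoint_inner_left T _ _).symm
    have h2 : ((ContinuousLinearMap.adjoint T) (p : H)) = ((S p : V) : H) := (hS p).symm
    have h3 : (inner ℂ (S p) u : ℂ) = inner ℂ p (LinearMap.adjoint S u) :=
      (LinearMap.adjoint_inner_right S p u).symm
    have h4 : (inner ℂ ((S p : V) : H) ((u : V) : H) : ℂ) = inner ℂ (S p) u := rfl
    rw [h1, h2, h4, h3, heig, inner_smul_right]
    have h5 : (inner ℂ ((p : H)) ((u : V) : H) : ℂ) = inner ℂ p u := rfl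
    rw [h5, sub_self]
  have e1 : Φ (u : H) (f x) = inner ℂ (kfun x) (T (u : H)) := by
    rw [← hKoop, hrepro]
  have e2 : Φ (u : H) x = inner ℂ (kfun x) ((u : H)) := hrepro _ _
  have e3 : Φ (u : H) (f x) - lam * Φ (u : H) x = inner ℂ (kfun x - (p : H)) w := by
    rw [e1, e2, inner_sub_left, hkey, sub_zero, hw]
  rw [e3]
  have hcs : ‖(inner ℂ (kfun x - (p : H)) w : ℂ)‖ ≤ ‖kfun x - (p : H)‖ * ‖w‖ :=
    norm_inner_le_norm _ _
  have hwn : ‖w‖ ≤ ‖T - lam • (1 : H →L[ℂ] H)‖ := by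
    have := (T - lam • (1 : H →L[ℂ] H)).le_opNorm (u : H)
    have hun : ‖(u : H)‖ = 1 := hu
    simpa [hwdef, hun] using this
  calc ‖(inner ℂ (kfun x - (p : H)) w : ℂ)‖ ≤ ‖kfun x - (p : H)‖ * ‖w‖ := hcs
    _ ≤ ‖kfun x - (p : H)‖ * ‖T - lam • (1 : H →L[ℂ] H)‖ := by
        exact mul_le_mul_of_nonneg_left hwn (norm_nonneg _)
    _ = ‖T - lam • (1 : H →L[ℂ] H)‖ * ‖kfun x - (p : H)‖ := mul_comm _ _
end
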